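/- Let m ≥ 2 be even and n ≥ 2 be even. Set α = n/(n−1) and β = (1−n)/n, and let u₁ = (1, α, α², …, α^{n−1}) ∈ ℝ^n and u₂ = (1, β, β², …, β^{n−1}) ∈ ℝ^n. Let H_V be the m-th order n-dimensional tensor with entries (H_V)_{i_1,…,i_m} = (u₁)_{i_1}⋯(u₁)_{i_m} + (u₂)_{i_1}⋯(u₂)_{i_m}, so that H_V x^m = (u₁^T x)^m + (u₂^T x)^m and H_V x^{m−1} = (u₁^T x)^{m−1} u₁ + (u₂^T x)^{m−1} u₂. Then: (i) u₁^T u₂ = 0; (ii) for every x ∈ ℝ^n with ‖x‖ = 1, H_V x^m ≤ ‖u₁‖^m, with equality at x = u₁/‖u₁‖; (iii) H_V (u₁/‖u₁‖)^{m−1} = ‖u₁‖^m · (u₁/‖u₁‖), so (‖u₁‖^m, u₁/‖u₁‖) is a Z-eigenpair of H_V; and consequently (iv) every Z-eigenvalue λ of H_V satisfies λ ≤ ‖u₁‖^m, i.e. ‖u₁‖^m is the largest Z-eigenvalue of H_V. -/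

import Mathlib

/-- `A x^m` for an `m`-th order `n`-dimensional tensor `A`. -/
noncomputable def tpow {m n : ℕ} (A : (Fin m → Fin n) → ℝ) (x : EuclideanSpace ℝ (Fin n)) : ℝ :=
  ∑ g : Fin m → Fin n, A g * ∏ j, x (g j)

/-- `A x^{m-1}`, the vector with `i`-th entry `Σ_{i₂,…,i_m} a_{i,i₂,…,i_m} x_{i₂}⋯x_{i_m}`. -/
noncomputable def tvec {m n : ℕ} (hm : 0 < m) (A : (Fin m → Fin n) → ℝ)
    (x : EuclideanSpace ℝ (Fin n)) : EuclideanSpace ℝ (Fin n) :=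
  WithLp.toLp 2 fun i => ∑ g : Fin m → Fin n,
    if g ⟨0, hm⟩ = i then A g * ∏ j ∈ Finset.univ.erase ⟨0, hm⟩, x (g j) else 0

/-! Since `αβ = -1` and `n` is even, `u₁ ⟂ u₂`, and `|β| < 1 < α` gives `‖u₂‖ ≤ ‖u₁‖`. For a
unit vector `x`, `H_V x^m = ⟨u₁,x⟩^m + ⟨u₂,x⟩^m ≤ (⟨u₁,x⟩² + ⟨u₂,x⟩²)^(m/2) ≤ ‖u₁‖^m` by a
Bessel-type inequality, with equality at `u₁/‖u₁‖`, where `H_V x^{m-1}` is a multiple of `u₁`.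
Finally a Z-eigenvalue `λ` with eigenvector `x` equals `⟨H_V x^{m-1}, x⟩ = H_V x^m`, so it obeys
the same bound. -/

open scoped RealInnerProductSpace

theorem EuclideanSpace.real_inner_eq_sum_mul {ι : Type*} [Fintype ι] (x y : EuclideanSpace ℝ ι) :
    ⟪x, y⟫ = ∑ i, x i * y i := by
  simp [PiLp.inner_apply, mul_comm]

theorem Fin.prod_univ_erase_zero {M : Type*} [CommMonoid M] {k : ℕ} (f : Fin (k + 1) → M) :
    ∏ j ∈ Finset.univ.erase 0, f j = ∏ j : Fin k, f j.succ := by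
  rw [Fin.univ_succ, Finset.erase_cons, Finset.prod_map]
  rfl

open EuclideanSpace

section InnerProductSpace

variable {E : Type*} [NormedAddCommGroup E] [InnerProductSpace ℝ E]

/- Bessel's inequality for the orthogonal pair `u, v`, weakened by `‖v‖ ≤ ‖u‖`. Cauchy–Schwarz
against `y = ⟪u, x⟫ • u + ⟪v, x⟫ • v`, with `⟪y, x⟫ = s` and `‖y‖² ≤ ‖u‖² s`, gives
`s² ≤ ‖u‖² s ‖x‖²` without normalizing `v`, which may vanish. -/
theorem inner_sq_add_inner_sq_le {u v : E} (huv : ⟪u, v⟫ = 0) (hvu : ‖v‖ ≤ ‖u‖) (x : E) :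
    ⟪u, x⟫ ^ 2 + ⟪v, x⟫ ^ 2 ≤ ‖u‖ ^ 2 * ‖x‖ ^ 2 := by
  set s := ⟪u, x⟫ ^ 2 + ⟪v, x⟫ ^ 2
  set y := ⟪u, x⟫ • u + ⟪v, x⟫ • v
  have hyx : ⟪y, x⟫ = s := by
    simp only [y, s, inner_add_left, real_inner_smul_left, sq]
  have hy : ‖y‖ ^ 2 ≤ ‖u‖ ^ 2 * s := by
    have hpyth := norm_add_sq_eq_norm_sq_add_norm_sq_real
      (x := ⟪u, x⟫ • u) (y := ⟪v, x⟫ • v)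
      (by simp [real_inner_smul_left, real_inner_smul_right, huv])
    have hvu2 : ‖v‖ ^ 2 ≤ ‖u‖ ^ 2 := pow_le_pow_left₀ (norm_nonneg v) hvu 2
    simp only [norm_smul, Real.norm_eq_abs] at hpyth
    nlinarith [sq_abs ⟪u, x⟫, sq_abs ⟪v, x⟫, sq_nonneg ⟪v, x⟫]
  have hcs : s ^ 2 ≤ ‖y‖ ^ 2 * ‖x‖ ^ 2 := by
    rw [← hyx, ← real_inner_self_eq_norm_sq, ← real_inner_self_eq_norm_sq, sq]
    exact real_inner_mul_inner_self_le y x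
  rcases (show 0 ≤ s by positivity).eq_or_lt with hs | hs
  · rw [← hs]; positivity
  · refine le_of_mul_le_mul_left ?_ hs
    nlinarith [sq_nonneg ‖x‖]

theorem inner_pow_add_inner_pow_le {u v : E} (huv : ⟪u, v⟫ = 0) (hvu : ‖v‖ ≤ ‖u‖) {m : ℕ}
    (hm₀ : m ≠ 0) (hm : Even m) (x : E) :
    ⟪u, x⟫ ^ m + ⟪v, x⟫ ^ m ≤ (‖u‖ * ‖x‖) ^ m := by
  obtain ⟨k, rfl⟩ := hm
  have hk : k ≠ 0 := by omega
  calc ⟪u, x⟫ ^ (k + k) + ⟪v, x⟫ ^ (k + k) = (⟪u, x⟫ ^ 2) ^ k + (⟪v, x⟫ ^ 2) ^ k := by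
        rw [← two_mul, pow_mul, pow_mul]
    _ ≤ (⟪u, x⟫ ^ 2 + ⟪v, x⟫ ^ 2) ^ k := pow_add_pow_le (sq_nonneg _) (sq_nonneg _) hk
    _ ≤ (‖u‖ ^ 2 * ‖x‖ ^ 2) ^ k :=
        pow_le_pow_left₀ (by positivity) (inner_sq_add_inner_sq_le huv hvu x) k
    _ = (‖u‖ * ‖x‖) ^ (k + k) := by ring

theorem inner_inv_norm_smul_self {u : E} (hu : u ≠ 0) : ⟪u, ‖u‖⁻¹ • u⟫ = ‖u‖ := by
  rw [real_inner_smul_right, real_inner_self_eq_norm_sq]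
  field_simp [norm_ne_zero_iff.mpr hu]

end InnerProductSpace

section Tensor

variable {m n : ℕ}

def tensorPow (m : ℕ) (u : EuclideanSpace ℝ (Fin n)) : (Fin m → Fin n) → ℝ :=
  fun g => ∏ j, u (g j)

theorem tpow_add (A B : (Fin m → Fin n) → ℝ) (x : EuclideanSpace ℝ (Fin n)) :
    tpow (A + B) x = tpow A x + tpow B x := by
  simp only [tpow, Pi.add_apply, add_mul, Finset.sum_add_distrib]

theorem tvec_add (hm : 0 < m) (A B : (Fin m → Fin n) → ℝ) (x : EuclideanSpace ℝ (Fin n)) :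
    tvec hm (A + B) x = tvec hm A x + tvec hm B x := by
  ext i
  simp only [tvec, PiLp.add_apply, PiLp.toLp_apply, Pi.add_apply, ← Finset.sum_add_distrib]
  refine Finset.sum_congr rfl fun g _ => ?_
  split_ifs <;> ring

theorem tvec_succ_apply {k : ℕ} (hm : 0 < k + 1) (A : (Fin (k + 1) → Fin n) → ℝ)
    (x : EuclideanSpace ℝ (Fin n)) (i : Fin n) :
    tvec hm A x i = ∑ t : Fin k → Fin n, A (Fin.cons i t) * ∏ j, x (t j) := by
  rw [tvec, PiLp.toLp_apply, ← (Fin.consEquiv fun _ => Fin n).sum_comp, Fintype.sum_prod_type,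
    Finset.sum_comm]
  simp only [Fin.consEquiv, Equiv.coe_fn_mk, Fin.zero_eta, Fin.cons_zero, Finset.sum_ite_eq',
    Finset.mem_univ, if_true, Fin.prod_univ_erase_zero, Fin.cons_succ]

theorem sum_tvec_mul_self (hm : 0 < m) (A : (Fin m → Fin n) → ℝ) (x : EuclideanSpace ℝ (Fin n)) :
    ∑ i, tvec hm A x i * x i = tpow A x := by
  obtain ⟨k, rfl⟩ : ∃ k, m = k + 1 := ⟨m - 1, by omega⟩
  rw [tpow, ← (Fin.consEquiv fun _ => Fin n).sum_comp, Fintype.sum_prod_type]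
  refine Finset.sum_congr rfl fun i _ => ?_
  simp only [tvec_succ_apply, Finset.sum_mul, Fin.consEquiv, Equiv.coe_fn_mk, Fin.prod_univ_succ,
    Fin.cons_zero, Fin.cons_succ]
  exact Finset.sum_congr rfl fun t _ => by ring

theorem eq_tpow_of_tvec_eq_mul (hm : 0 < m) {A : (Fin m → Fin n) → ℝ} {lam : ℝ}
    {x : EuclideanSpace ℝ (Fin n)} (hx : ∀ i, tvec hm A x i = lam * x i)
    (hx₁ : ∑ i, x i * x i = 1) : lam = tpow A x :=
  calc lam = lam * ∑ i, x i * x i := by rw [hx₁, mul_one]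
    _ = ∑ i, tvec hm A x i * x i := by simp only [hx, Finset.mul_sum, mul_assoc]
    _ = tpow A x := sum_tvec_mul_self hm A x

theorem tpow_tensorPow (u x : EuclideanSpace ℝ (Fin n)) :
    tpow (tensorPow m u) x = ⟪u, x⟫ ^ m := by
  simp only [tpow, tensorPow, ← Finset.prod_mul_distrib, real_inner_eq_sum_mul, Fintype.sum_pow]

theorem tvec_tensorPow (hm : 0 < m) (u x : EuclideanSpace ℝ (Fin n)) :
    tvec hm (tensorPow m u) x = ⟪u, x⟫ ^ (m - 1) • u := by
  obtain ⟨k, rfl⟩ : ∃ k, m = k + 1 := ⟨m - 1, by omega⟩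
  ext i
  simp only [tvec_succ_apply, tensorPow, Fin.prod_univ_succ, Fin.cons_zero, Fin.cons_succ,
    PiLp.smul_apply, smul_eq_mul, Nat.add_sub_cancel, real_inner_eq_sum_mul, Fintype.sum_pow,
    Finset.sum_mul, Finset.prod_mul_distrib]
  exact Finset.sum_congr rfl fun t _ => by ring

theorem tpow_tensorPow_add_tensorPow_le (hm₀ : m ≠ 0) (hm : Even m)
    {u v : EuclideanSpace ℝ (Fin n)} (huv : ⟪u, v⟫ = 0) (hvu : ‖v‖ ≤ ‖u‖)
    {x : EuclideanSpace ℝ (Fin n)} (hx : ‖x‖ = 1) :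
    tpow (tensorPow m u + tensorPow m v) x ≤ ‖u‖ ^ m := by
  simpa [tpow_add, tpow_tensorPow, hx] using inner_pow_add_inner_pow_le huv hvu hm₀ hm x

theorem tpow_tensorPow_add_tensorPow_inv_norm_smul (hm₀ : m ≠ 0) {u v : EuclideanSpace ℝ (Fin n)}
    (huv : ⟪u, v⟫ = 0) (hu : u ≠ 0) :
    tpow (tensorPow m u + tensorPow m v) (‖u‖⁻¹ • u) = ‖u‖ ^ m := by
  rw [tpow_add, tpow_tensorPow, tpow_tensorPow, inner_inv_norm_smul_self hu,
    real_inner_smul_right, real_inner_comm, huv, mul_zero, zero_pow hm₀, add_zero]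

theorem tvec_tensorPow_add_tensorPow_inv_norm_smul (hm : 0 < m) (hm₂ : 2 ≤ m)
    {u v : EuclideanSpace ℝ (Fin n)} (huv : ⟪u, v⟫ = 0) (hu : u ≠ 0) :
    tvec hm (tensorPow m u + tensorPow m v) (‖u‖⁻¹ • u) = ‖u‖ ^ m • (‖u‖⁻¹ • u) := by
  rw [tvec_add, tvec_tensorPow, tvec_tensorPow, inner_inv_norm_smul_self hu,
    real_inner_smul_right, real_inner_comm, huv, mul_zero, zero_pow (by omega), zero_smul,
    add_zero, smul_smul, pow_sub₀ _ (norm_ne_zero_iff.mpr hu) (by omega : 1 ≤ m), pow_one]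

end Tensor

theorem div_sub_one_mul_one_sub_div {x : ℝ} (hx : 1 < x) : x / (x - 1) * ((1 - x) / x) = -1 := by
  field_simp [show x - 1 ≠ 0 by linarith]
  ring

theorem abs_one_sub_div_le_abs_div_sub_one {x : ℝ} (hx : 1 < x) :
    |(1 - x) / x| ≤ |x / (x - 1)| := by
  rw [abs_div, abs_div, abs_sub_comm, abs_of_pos (by linarith : 0 < x),
    abs_of_pos (by linarith : 0 < x - 1), div_le_div_iff₀ (by linarith) (by linarith)]
  nlinarith

def vandermondeVec (n : ℕ) (a : ℝ) : EuclideanSpace ℝ (Fin n) :=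
  WithLp.toLp 2 fun i => a ^ (i : ℕ)

theorem inner_vandermondeVec_eq_zero {n : ℕ} (hn : Even n) {a b : ℝ} (hab : a * b = -1) :
    ⟪vandermondeVec n a, vandermondeVec n b⟫ = 0 := by
  simp only [real_inner_eq_sum_mul, vandermondeVec, ← mul_pow, hab]
  rw [Fin.sum_univ_eq_sum_range (fun i => (-1 : ℝ) ^ i), neg_one_geom_sum, if_pos hn]

theorem norm_vandermondeVec_le {n : ℕ} {a b : ℝ} (h : |b| ≤ |a|) :
    ‖vandermondeVec n b‖ ≤ ‖vandermondeVec n a‖ := by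
  simp only [EuclideanSpace.norm_eq, vandermondeVec, norm_pow, Real.norm_eq_abs]
  gcongr

theorem vandermondeVec_ne_zero {n : ℕ} (hn : n ≠ 0) (a : ℝ) : vandermondeVec n a ≠ 0 := by
  intro h
  simpa [vandermondeVec] using congrArg (· ⟨0, Nat.pos_of_ne_zero hn⟩) h

/-- for the Vandermonde (Hankel) tensor
`H_V = u₁^{⊗m} + u₂^{⊗m}` with `u₁ = (1,α,…,α^{n−1})`, `u₂ = (1,β,…,β^{n−1})`,
`α = n/(n−1)`, `β = (1−n)/n`, and `m, n` even: (i) `u₁ ⟂ u₂`; (ii) `H_V x^m ≤ ‖u₁‖^m`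
on the unit sphere with equality at `u₁/‖u₁‖`; (iii) `(‖u₁‖^m, u₁/‖u₁‖)` is a
Z-eigenpair of `H_V`; (iv) every Z-eigenvalue `λ` of `H_V` satisfies `λ ≤ ‖u₁‖^m`,
i.e. `‖u₁‖^m` is the largest Z-eigenvalue of `H_V`. -/
theorem vandermonde_largest_Z_eigenvalue
    {m n : ℕ} (hm : 0 < m) (hm2 : 2 ≤ m) (hmeven : Even m)
    (hn2 : 2 ≤ n) (hneven : Even n)
    (a b : ℝ) (ha : a = (n : ℝ) / ((n : ℝ) - 1)) (hb : b = (1 - (n : ℝ)) / (n : ℝ))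
    (u₁ u₂ : EuclideanSpace ℝ (Fin n))
    (hu₁ : ∀ i : Fin n, u₁ i = a ^ (i : ℕ))
    (hu₂ : ∀ i : Fin n, u₂ i = b ^ (i : ℕ))
    (HV : (Fin m → Fin n) → ℝ)
    (hHV : ∀ g : Fin m → Fin n, HV g = (∏ j, u₁ (g j)) + ∏ j, u₂ (g j)) :
    (∑ i, u₁ i * u₂ i = 0) ∧
    (∀ x : EuclideanSpace ℝ (Fin n), ‖x‖ = 1 → tpow HV x ≤ ‖u₁‖ ^ m) ∧
    (tpow HV (‖u₁‖⁻¹ • u₁) = ‖u₁‖ ^ m) ∧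
    (∀ i, tvec hm HV (‖u₁‖⁻¹ • u₁) i = ‖u₁‖ ^ m * (‖u₁‖⁻¹ • u₁) i) ∧
    (∀ (lam : ℝ) (x : EuclideanSpace ℝ (Fin n)),
      (∀ i, tvec hm HV x i = lam * x i) → (∑ i, x i * x i = 1) →
        lam ≤ ‖u₁‖ ^ m) := by
  have hn : (1 : ℝ) < n := by exact_mod_cast hn2
  have hab : a * b = -1 := ha ▸ hb ▸ div_sub_one_mul_one_sub_div hn
  have hba : |b| ≤ |a| := ha ▸ hb ▸ abs_one_sub_div_le_abs_div_sub_one hn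
  obtain rfl : u₁ = vandermondeVec n a := by ext i; simp [vandermondeVec, hu₁]
  obtain rfl : u₂ = vandermondeVec n b := by ext i; simp [vandermondeVec, hu₂]
  obtain rfl : HV = tensorPow m (vandermondeVec n a) + tensorPow m (vandermondeVec n b) :=
    funext hHV
  have huv := inner_vandermondeVec_eq_zero hneven hab
  have hvu := norm_vandermondeVec_le (n := n) hba
  have hu := vandermondeVec_ne_zero (by omega : n ≠ 0) a
  refine ⟨by rwa [← real_inner_eq_sum_mul], fun x hx =>
    tpow_tensorPow_add_tensorPow_le hm.ne' hmeven huv hvu hx,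
    tpow_tensorPow_add_tensorPow_inv_norm_smul hm.ne' huv hu, fun i => ?_, fun lam x hx hx₁ => ?_⟩
  · rw [tvec_tensorPow_add_tensorPow_inv_norm_smul hm hm2 huv hu]
    rfl
  · rw [eq_tpow_of_tvec_eq_mul hm hx hx₁]
    refine tpow_tensorPow_add_tensorPow_le hm.ne' hmeven huv hvu ?_
    rw [← real_inner_eq_sum_mul, real_inner_self_eq_norm_sq] at hx₁
    exact (pow_eq_one_iff_of_nonneg (norm_nonneg x) two_ne_zero).mp hx₁
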